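/- arXiv:0904.1266 — 3 statements merged into one kernel-verified Lean document; each statement's English description precedes it below -/
import Mathlib

section
/- If a and b are positive integers with gcd(a,b)=1 and a,b ≥ 2, then (a-1)(b-1)-1 cannot be written as k₁·a + k₂·b with k₁, k₂ nonnegative integers. -/
theorem Nat.sub_one_mul_sub_one_sub_one_add_add {a b : ℕ} (ha : 2 ≤ a) (hb : 2 ≤ b) :
    (a - 1) * (b - 1) - 1 + a + b = a * b := by
  have hab : 1 ≤ (a - 1) * (b - 1) := Nat.mul_pos (by omega) (by omega)
  zify [hab, (by omega : 1 ≤ a), (by omega : 1 ≤ b)]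
  ring

theorem sylvester_frobenius_number (a b : ℕ) (ha : 2 ≤ a) (hb : 2 ≤ b)
    (hab : Nat.gcd a b = 1) :
    ¬ ∃ k₁ k₂ : ℕ, (a - 1) * (b - 1) - 1 = k₁ * a + k₂ * b := by
  rintro ⟨k₁, k₂, h⟩
  have hsum : (k₁ + 1) * a + (k₂ + 1) * b = a * b := by
    rw [← Nat.sub_one_mul_sub_one_sub_one_add_add ha hb, h]
    ring
  exact Nat.Coprime.mul_add_mul_ne_mul hab k₁.succ_ne_zero k₂.succ_ne_zero hsum
end

section
/- Let p₂ > 3 be a prime and d₃ ≥ p₂ an integer. Then d₃ is NOT representable as 3k₁ + p₂k₂ with k₁,k₂ ∈ ℕ if and only if d₃ ∈ {2p₂ - 3k : k = 1, …, ⌊p₂/3⌋}. -/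
/-!
Modulo 3 the multiples `p * y` with `y = 0, 1, 2` cover all residues when `3 ∤ p`, and `d` is a sum
`3 * x + p * y` exactly when `d ≥ p * y` for the `y < 3` with `p * y ≡ d [MOD 3]`. For `d ≥ p` the
only failure is therefore `d ≡ 2 * p [MOD 3]` with `d < 2 * p`, i.e. `d = 2 * p - 3 * k` with
`1 ≤ k ≤ p / 3`.
-/

namespace Nat

theorem exists_eq_mul_add_mul_iff {a b d : ℕ} (ha : 0 < a) :
    (∃ x y, d = a * x + b * y) ↔ ∃ y < a, b * y ≤ d ∧ b * y ≡ d [MOD a] := by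
  constructor
  · rintro ⟨x, y, rfl⟩
    refine ⟨y % a, mod_lt y ha, ?_, ?_⟩
    · calc b * (y % a) ≤ b * y := Nat.mul_le_mul_left b (mod_le y a)
        _ ≤ a * x + b * y := le_add_self
    · calc b * (y % a) ≡ b * y [MOD a] := (mod_modEq y a).mul_left b
        _ ≡ a * x + b * y [MOD a] := by simp [ModEq, add_mod]
  · rintro ⟨y, -, hle, hmod⟩
    obtain ⟨x, hx⟩ := (modEq_iff_dvd' hle).mp hmod
    exact ⟨x, y, by omega⟩

theorem not_exists_eq_three_mul_add_mul_iff {p d : ℕ} (hp : ¬ 3 ∣ p) (hd : p ≤ d) :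
    (¬ ∃ x y, d = 3 * x + p * y) ↔ d < 2 * p ∧ d ≡ 2 * p [MOD 3] := by
  simp only [exists_eq_mul_add_mul_iff three_pos, not_exists, not_and, ModEq]
  have hp' : p % 3 = 1 ∨ p % 3 = 2 := by omega
  constructor
  · intro h
    have h₀ := h 0 three_pos
    have h₁ := h 1 (by norm_num)
    have h₂ := h 2 (by norm_num)
    omega
  · rintro ⟨hlt, hmod⟩ y hy
    interval_cases y <;> omega

theorem lt_two_mul_and_modEq_iff_eq_two_mul_sub {p d : ℕ} (hd : p ≤ d) :
    d < 2 * p ∧ d ≡ 2 * p [MOD 3] ↔ ∃ k, 1 ≤ k ∧ k ≤ p / 3 ∧ d = 2 * p - 3 * k := by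
  unfold ModEq
  constructor
  · rintro ⟨hlt, hmod⟩
    exact ⟨(2 * p - d) / 3, by omega, by omega, by omega⟩
  · rintro ⟨k, hk₁, hk, rfl⟩
    omega

end Nat

theorem not_representable_iff_gap_set (p₂ d₃ : ℕ) (hp : Nat.Prime p₂) (hp3 : 3 < p₂)
    (hd : p₂ ≤ d₃) :
    (¬ ∃ k₁ k₂ : ℕ, d₃ = 3 * k₁ + p₂ * k₂) ↔
      ∃ k : ℕ, 1 ≤ k ∧ k ≤ p₂ / 3 ∧ d₃ = 2 * p₂ - 3 * k := by
  have h3p : ¬ 3 ∣ p₂ := fun h ↦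
    hp3.ne ((Nat.prime_dvd_prime_iff_eq Nat.prime_three hp).mp h)
  rw [Nat.not_exists_eq_three_mul_add_mul_iff h3p hd]
  exact Nat.lt_two_mul_and_modEq_iff_eq_two_mul_sub hd
end

section
/- For coprime positive integers a < b with a ≥ 2, the number of positive integers not representable as a nonnegative integer combination of a and b equals (a-1)(b-1)/2. -/
/-!
Let `S` be the monoid generated by `a` and `b` and `F = ab - a - b`. Every `n > F` lies in `S`,
and for `0 ≤ n ≤ F` exactly one of `n` and `F - n` lies in `S`: write `n ≡ xb (mod a)` with
`0 ≤ x < a`; if `n ≥ xb` then `n ∈ S`, otherwise `F - n = (a - 1 - x)b + (y - 1)a` with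
`xb - n = ya`, `y ≥ 1`. Both cannot lie in `S`, since their sum `F` does not. Hence
`n ↦ F - n` exchanges the gaps and the elements of `S` in `[0, F]`, and the `F + 1 = (a-1)(b-1)`
numbers there split evenly.
-/

open Finset

lemma AddSubmonoid.mem_closure_pair_iff_exists_mul {a b n : ℕ} :
    n ∈ AddSubmonoid.closure {a, b} ↔ ∃ k₁ k₂ : ℕ, n = k₁ * a + k₂ * b := by
  simp only [AddSubmonoid.mem_closure_pair, smul_eq_mul, eq_comm]

lemma Nat.Coprime.exists_lt_mul_modEq {a b : ℕ} (hab : a.Coprime b) (ha : 0 < a) (n : ℕ) :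
    ∃ x < a, x * b ≡ n [MOD a] := by
  have : NeZero a := ⟨ha.ne'⟩
  refine ⟨((n : ZMod a) * (b : ZMod a)⁻¹).val, ZMod.val_lt _, ?_⟩
  rw [← ZMod.natCast_eq_natCast_iff]
  push_cast
  rw [ZMod.natCast_zmod_val, mul_assoc, mul_comm _ (b : ZMod a),
    ZMod.coe_mul_inv_eq_one b hab.symm, mul_one]

lemma Nat.Coprime.mem_closure_pair_or_of_add_eq {a b n m : ℕ} (hab : a.Coprime b) (ha : 0 < a)
    (hnm : n + m + a + b = a * b) :
    n ∈ AddSubmonoid.closure {a, b} ∨ m ∈ AddSubmonoid.closure {a, b} := by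
  simp only [AddSubmonoid.mem_closure_pair_iff_exists_mul]
  obtain ⟨x, hxa, hx⟩ := hab.exists_lt_mul_modEq ha n
  rcases le_or_gt (x * b) n with hle | hlt
  · obtain ⟨y, hy⟩ := (Nat.modEq_iff_dvd' hle).mp hx
    exact .inl ⟨y, x, by rw [mul_comm y, ← hy]; omega⟩
  · obtain ⟨y, hy⟩ := (Nat.modEq_iff_dvd' hlt.le).mp hx.symm
    obtain ⟨c, hc⟩ := Nat.exists_eq_add_of_lt hxa
    obtain ⟨y', rfl⟩ := Nat.exists_eq_add_one_of_ne_zero (n := y) (by rintro rfl; omega)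
    have hab_eq : a * b = x * b + c * b + b := by rw [hc]; ring
    have hxb : x * b = n + (a * y' + a) := by rw [← mul_add_one, ← hy]; omega
    exact .inr ⟨y', c, by linarith⟩

lemma Nat.Coprime.mem_closure_pair_iff_notMem_of_add_eq {a b n m : ℕ} (hab : a.Coprime b)
    (ha : 1 < a) (hb : 1 < b) (hnm : n + m + a + b = a * b) :
    n ∈ AddSubmonoid.closure {a, b} ↔ m ∉ AddSubmonoid.closure {a, b} := by
  refine ⟨fun hn hm => ?_, (hab.mem_closure_pair_or_of_add_eq (by omega) hnm).resolve_right⟩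
  have hF := (frobeniusNumber_iff.mp (frobeniusNumber_pair hab ha hb)).1
  rw [show a * b - a - b = n + m by omega] at hF
  exact hF (add_mem hn hm)

lemma Finset.two_mul_card_filter_range_of_reflect {p : ℕ → Prop} [DecidablePred p] {N : ℕ}
    (h : ∀ n ≤ N, p (N - n) ↔ ¬ p n) : 2 * #{n ∈ range (N + 1) | p n} = N + 1 := by
  have hswap : #{n ∈ range (N + 1) | p n} = #{n ∈ range (N + 1) | ¬ p n} := by
    apply card_nbij' (N - ·) (N - ·) <;> intro n hn <;>
      simp only [coe_filter, Set.mem_ofPred_eq, mem_range] at hn ⊢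
    · exact ⟨by omega, fun hp => (h n (by omega)).mp hp hn.2⟩
    · exact ⟨by omega, (h n (by omega)).mpr hn.2⟩
    all_goals omega
  rw [two_mul]
  nth_rw 2 [hswap]
  rw [card_filter_add_card_filter_not, card_range]

theorem sylvester_gap_count (a b : ℕ) (ha : 2 ≤ a) (hab : a < b)
    (hcop : Nat.Coprime a b) :
    Set.ncard {n : ℕ | 0 < n ∧ ¬ ∃ k₁ k₂ : ℕ, n = k₁ * a + k₂ * b} =
      (a - 1) * (b - 1) / 2 := by
  classical
  set S := AddSubmonoid.closure ({a, b} : Set ℕ)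
  have hb : 1 < b := by omega
  have hfrob := frobeniusNumber_iff.mp (frobeniusNumber_pair hcop (by omega) hb)
  set F := a * b - a - b
  have hFab : F + a + b = a * b := by have := Nat.add_le_mul (by omega : 1 < a) hb; omega
  have hF : F + 1 = (a - 1) * (b - 1) := by
    obtain ⟨a', rfl⟩ := Nat.exists_eq_add_one_of_ne_zero (by omega : a ≠ 0)
    obtain ⟨b', rfl⟩ := Nat.exists_eq_add_one_of_ne_zero (by omega : b ≠ 0)
    simp only [Nat.add_sub_cancel]
    nlinarith
  have hgaps : {n : ℕ | 0 < n ∧ ¬ ∃ k₁ k₂ : ℕ, n = k₁ * a + k₂ * b} =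
      ↑{n ∈ range (F + 1) | n ∉ S} := by
    ext n
    simp only [← AddSubmonoid.mem_closure_pair_iff_exists_mul, coe_filter, mem_range]
    constructor
    · rintro ⟨-, hn⟩
      exact ⟨Nat.lt_succ_of_le (not_lt.mp fun hlt => hn (hfrob.2 n hlt)), hn⟩
    · rintro ⟨hle, hn⟩
      exact ⟨Nat.pos_of_ne_zero (by rintro rfl; exact hn S.zero_mem), hn⟩
  have hcount : 2 * #{n ∈ range (F + 1) | n ∉ S} = F + 1 :=
    two_mul_card_filter_range_of_reflect fun n hn =>
      (hcop.mem_closure_pair_iff_notMem_of_add_eq (m := F - n) (by omega) hb (by omega)).symm.trans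
        not_not.symm
  rw [hgaps, Set.ncard_coe_finset]
  omega
end
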